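/- Let φ(ξ) = ξ cosh ξ − sinh ξ and τ > 0. For every x ∈ ℝ³ with |x − p| > η, the mean value identity (1/4π) ∫_{B_η(p)} e^{−τ|x−y|}/|x−y| dy = (φ(τη)/τ³) · e^{−τ|x−p|}/|x−p| holds. -/

import Mathlib

open Real MeasureTheory Set


lemma sqrt_deriv_aux {b : ℝ} (hb : 0 < b) (r : ℝ) :
    HasDerivAt (fun s : ℝ => Real.sqrt (b^2 + s^2)) (r / Real.sqrt (b^2 + r^2)) r := by
  have h1 : HasDerivAt (fun s : ℝ => b^2 + s^2) (2*r) r := by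
    simpa using ((hasDerivAt_pow 2 r).const_add (b^2))
  have h2 : (b^2 + r^2) ≠ 0 := by positivity
  have := (Real.hasDerivAt_sqrt h2).comp r h1
  refine this.congr_deriv ?_
  have hs : Real.sqrt (b^2 + r^2) > 0 := Real.sqrt_pos.2 (by positivity)
  field_simp

lemma inner1d {τ b : ℝ} (hτ : 0 < τ) (hb : 0 < b) (ρ : ℝ) (hρ : 0 ≤ ρ) :
    ∫ r in (0:ℝ)..ρ, r * (Real.exp (-τ * Real.sqrt (b^2 + r^2)) / Real.sqrt (b^2 + r^2)) =
      (Real.exp (-τ*b) - Real.exp (-τ * Real.sqrt (b^2+ρ^2)))/τ := by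
  have key : ∀ r ∈ Set.uIcc (0:ℝ) ρ, HasDerivAt
      (fun s : ℝ => -(1/τ) * Real.exp (-τ * Real.sqrt (b^2 + s^2)))
      (r * (Real.exp (-τ * Real.sqrt (b^2 + r^2)) / Real.sqrt (b^2 + r^2))) r := by
    intro r _
    have h1 := sqrt_deriv_aux hb r
    have h2 := ((h1.const_mul (-τ)).exp).const_mul (-(1/τ))
    refine h2.congr_deriv ?_
    have hs : Real.sqrt (b^2 + r^2) > 0 := Real.sqrt_pos.2 (by positivity)
    field_simp
  have hcont : IntervalIntegrable
      (fun r => r * (Real.exp (-τ * Real.sqrt (b^2 + r^2)) / Real.sqrt (b^2 + r^2)))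
      volume 0 ρ := by
    apply ContinuousOn.intervalIntegrable
    apply ContinuousOn.mul continuousOn_id
    apply ContinuousOn.div
    · exact (Continuous.rexp (continuous_const.mul ((continuous_const.add (continuous_pow 2)).sqrt))).continuousOn
    · exact ((continuous_const.add (continuous_pow 2)).sqrt).continuousOn
    · intro s _
      exact ne_of_gt (Real.sqrt_pos.2 (by positivity))
  have := intervalIntegral.integral_eq_sub_of_hasDerivAt key hcont
  rw [this]
  have h0 : Real.sqrt (b^2 + 0^2) = b := by
    simp [Real.sqrt_sq hb.le]
  rw [h0]
  ring


lemma outer1d {τ R η : ℝ} (hτ : 0 < τ) (hη : 0 < η) (hR : η < R) :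
    ∫ t in (-η)..η, (Real.exp (-τ*(R-t)) - Real.exp (-τ*Real.sqrt (R^2-2*R*t+η^2)))
      = 2*Real.exp (-τ*R)*(τ*η*Real.cosh (τ*η) - Real.sinh (τ*η))/(τ^2*R) := by
  have hR0 : 0 < R := hη.trans hR
  set Φ : ℝ → ℝ := fun t => (1/τ) * Real.exp (-τ*(R-t)) -
      (1/(R*τ^2)) * ((τ * Real.sqrt (R^2-2*R*t+η^2) + 1) * Real.exp (-τ*Real.sqrt (R^2-2*R*t+η^2)))
    with hΦ
  have key : ∀ t ∈ Set.uIcc (-η) η, HasDerivAt Φ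
      (Real.exp (-τ*(R-t)) - Real.exp (-τ*Real.sqrt (R^2-2*R*t+η^2))) t := by
    intro t ht
    rw [Set.uIcc_of_le (by linarith)] at ht
    have ht2 : t ≤ η := ht.2
    have hv0 : 0 < R^2 - 2*R*t + η^2 := by nlinarith
    have hv : HasDerivAt (fun t : ℝ => R^2 - 2*R*t + η^2) (-(2*R)) t := by
      simpa using ((((hasDerivAt_id t).const_mul (2*R)).const_sub (R^2)).add_const (η^2))
    have hu : HasDerivAt (fun t : ℝ => Real.sqrt (R^2-2*R*t+η^2))
        (1 / (2 * Real.sqrt (R^2-2*R*t+η^2)) * -(2*R)) t :=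
      (Real.hasDerivAt_sqrt hv0.ne').comp t hv
    have hs : 0 < Real.sqrt (R^2-2*R*t+η^2) := Real.sqrt_pos.2 hv0
    have he := (hu.const_mul (-τ)).exp
    have hl := (hu.const_mul τ).add_const 1
    have hB := ((hl.mul he).const_mul (1/(R*τ^2)))
    have h1 : HasDerivAt (fun t : ℝ => -τ*(R-t)) τ t := by
      simpa using (((hasDerivAt_id t).const_sub R).const_mul (-τ))
    have hA := (h1.exp.const_mul (1/τ))
    have := hA.sub hB
    refine this.congr_deriv ?_
    field_simp
    ring
    have hX : √(-(R * t * 2) + R ^ 2 + η ^ 2) ≠ 0 := by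
      rw [show -(R * t * 2) + R ^ 2 + η ^ 2 = R^2-2*R*t+η^2 by ring]; exact hs.ne'
    rw [mul_right_comm (τ * √(-(R * t * 2) + R ^ 2 + η ^ 2)), mul_inv_cancel_right₀ hX τ]
  have hcont : IntervalIntegrable
      (fun t => Real.exp (-τ*(R-t)) - Real.exp (-τ*Real.sqrt (R^2-2*R*t+η^2)))
      volume (-η) η := by
    apply Continuous.intervalIntegrable
    fun_prop
  rw [intervalIntegral.integral_eq_sub_of_hasDerivAt key hcont, hΦ]
  beta_reduce
  have e1 : R^2-2*R*η+η^2 = (R-η)^2 := by ring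
  have e2 : R^2-2*R*(-η)+η^2 = (R+η)^2 := by ring
  rw [e1, e2, Real.sqrt_sq (by linarith), Real.sqrt_sq (by linarith)]
  have e3 : -τ*(R-η) = -(τ*R) + τ*η := by ring
  have e4 : -τ*(R-(-η)) = -(τ*R) + (-(τ*η)) := by ring
  have e5 : -τ*(R+η) = -(τ*R) + (-(τ*η)) := by ring
  have e6 : -τ*(R-η) = -(τ*R) + (τ*η) := by ring
  rw [e3, e4, e5, Real.exp_add, Real.exp_add, Real.cosh_eq, Real.sinh_eq,
    Real.exp_neg, Real.exp_neg]
  have hE : Real.exp (τ*η) ≠ 0 := (Real.exp_pos _).ne'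
  have : -τ*R = -(τ*R) := by ring
  rw [this, Real.exp_neg (τ*R)]
  have hE2 : Real.exp (τ*R) ≠ 0 := (Real.exp_pos _).ne'
  field_simp
  ring

lemma plane {τ b ρ : ℝ} (hτ : 0 < τ) (hb : 0 < b) (hρ : 0 < ρ) :
    ∫ w : ℝ × ℝ, Set.indicator {w : ℝ × ℝ | w.1^2 + w.2^2 < ρ^2}
      (fun w => Real.exp (-τ * Real.sqrt (b^2 + w.1^2 + w.2^2)) / Real.sqrt (b^2 + w.1^2 + w.2^2)) w
    = (2*π/τ) * (Real.exp (-τ*b) - Real.exp (-τ * Real.sqrt (b^2+ρ^2))) := by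
  rw [← integral_comp_polarCoord_symm]
  have hcongr : ∀ p ∈ polarCoord.target,
      p.1 • Set.indicator {w : ℝ × ℝ | w.1^2 + w.2^2 < ρ^2}
        (fun w => Real.exp (-τ * Real.sqrt (b^2 + w.1^2 + w.2^2)) / Real.sqrt (b^2 + w.1^2 + w.2^2))
        (polarCoord.symm p)
      = (fun r => r * Set.indicator {r : ℝ | r < ρ}
          (fun r => Real.exp (-τ * Real.sqrt (b^2 + r^2)) / Real.sqrt (b^2 + r^2)) r) p.1
        * (fun _ : ℝ => (1:ℝ)) p.2 := by
    intro p hp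
    rw [polarCoord_target] at hp
    obtain ⟨hp1, _⟩ := hp
    have hp1' : (0:ℝ) < p.1 := hp1
    have hsq : (polarCoord.symm p).1^2 + (polarCoord.symm p).2^2 = p.1^2 := by
      simp only [polarCoord_symm_apply]
      nlinarith [sin_sq_add_cos_sq p.2]
    have hiff : (polarCoord.symm p) ∈ {w : ℝ × ℝ | w.1^2 + w.2^2 < ρ^2} ↔ p.1 ∈ {r : ℝ | r < ρ} := by
      simp only [Set.mem_setOf_eq, hsq]
      constructor
      · intro h
        nlinarith
      · intro h
        nlinarith
    simp only [Set.indicator_apply, smul_eq_mul, mul_one]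
    rw [if_congr hiff rfl rfl]
    split_ifs with h
    · rw [show b^2 + (polarCoord.symm p).1^2 + (polarCoord.symm p).2^2 = b^2 + p.1^2 by
        rw [add_assoc, hsq]]
    · ring
  rw [setIntegral_congr_fun polarCoord.open_target.measurableSet hcongr, polarCoord_target,
    Measure.volume_eq_prod, ← Measure.prod_restrict]
  rw [integral_prod_mul (μ := volume.restrict (Ioi (0:ℝ))) (ν := volume.restrict (Ioo (-π) π))
    (f := fun r => r * Set.indicator {r : ℝ | r < ρ}
      (fun r => Real.exp (-τ * Real.sqrt (b^2 + r^2)) / Real.sqrt (b^2 + r^2)) r)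
    (g := fun _ : ℝ => (1:ℝ))]
  have hθ : (∫ _ in Set.Ioo (-π) π, (1:ℝ)) = 2*π := by
    simp [Real.volume_Ioo]
    rw [max_eq_left (by positivity)]
    ring
  have hr : (∫ r in Set.Ioi (0:ℝ), r * Set.indicator {r : ℝ | r < ρ}
      (fun r => Real.exp (-τ * Real.sqrt (b^2 + r^2)) / Real.sqrt (b^2 + r^2)) r)
      = (Real.exp (-τ*b) - Real.exp (-τ * Real.sqrt (b^2+ρ^2)))/τ := by
    have : ∀ r : ℝ, r * Set.indicator {r : ℝ | r < ρ}
        (fun r => Real.exp (-τ * Real.sqrt (b^2 + r^2)) / Real.sqrt (b^2 + r^2)) r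
        = Set.indicator {r : ℝ | r < ρ}
          (fun r => r * (Real.exp (-τ * Real.sqrt (b^2 + r^2)) / Real.sqrt (b^2 + r^2))) r := by
      intro r
      by_cases h : r ∈ {r : ℝ | r < ρ} <;> simp [Set.indicator_apply, h]
    simp_rw [this]
    rw [show {r : ℝ | r < ρ} = Set.Iio ρ from rfl,
      setIntegral_indicator (measurableSet_Iio (a := ρ))]
    have : Set.Ioi (0:ℝ) ∩ Set.Iio ρ = Set.Ioo 0 ρ := by
      ext r; simp [Set.mem_Ioo, and_comm]
    rw [this, ← integral_Ioc_eq_integral_Ioo, ← intervalIntegral.integral_of_le hρ.le]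
    exact inner1d hτ hb ρ hρ.le
  rw [hr, hθ]
  ring

noncomputable def Kfun (τ R η : ℝ) : ℝ × ℝ × ℝ → ℝ :=
  Set.indicator {u : ℝ × ℝ × ℝ | u.1^2 + u.2.1^2 + u.2.2^2 < η^2}
    (fun u => Real.exp (-τ * Real.sqrt ((R-u.1)^2 + u.2.1^2 + u.2.2^2)) /
      Real.sqrt ((R-u.1)^2 + u.2.1^2 + u.2.2^2))

lemma sliceInt (hτ : 0 < τ) (hη : 0 < η) (hR : η < R) (t : ℝ) :
    ∫ w : ℝ × ℝ, Kfun τ R η (t, w) =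
      Set.indicator (Set.Ioo (-η) η)
        (fun t => (2*π/τ) * (Real.exp (-τ*(R-t)) - Real.exp (-τ*Real.sqrt (R^2-2*R*t+η^2)))) t := by
  by_cases ht : t ∈ Set.Ioo (-η) η
  · have ht2 : t^2 < η^2 := by
      obtain ⟨h1, h2⟩ := ht
      nlinarith
    have hb : 0 < R - t := by have := ht.2; linarith
    set ρ : ℝ := Real.sqrt (η^2 - t^2) with hρdef
    have hρ : 0 < ρ := Real.sqrt_pos.2 (by linarith)
    have hρ2 : ρ^2 = η^2 - t^2 := Real.sq_sqrt (by linarith)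
    have heq : (fun w : ℝ × ℝ => Kfun τ R η (t, w)) =
        Set.indicator {w : ℝ × ℝ | w.1^2 + w.2^2 < ρ^2}
          (fun w => Real.exp (-τ * Real.sqrt ((R-t)^2 + w.1^2 + w.2^2)) /
            Real.sqrt ((R-t)^2 + w.1^2 + w.2^2)) := by
      funext w
      simp only [Kfun, Set.indicator_apply, Set.mem_setOf_eq, hρ2]
      have : t^2 + w.1^2 + w.2^2 < η^2 ↔ w.1^2 + w.2^2 < η^2 - t^2 := by constructor <;> intro <;> linarith
      rw [if_congr this rfl rfl]
    rw [heq, plane hτ hb hρ]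
    have harg : (R-t)^2 + ρ^2 = R^2 - 2*R*t + η^2 := by rw [hρ2]; ring
    rw [harg, Set.indicator_of_mem ht]
  · have hzero : ∀ w : ℝ × ℝ, Kfun τ R η (t, w) = 0 := by
      intro w
      apply Set.indicator_of_notMem
      simp only [Set.mem_setOf_eq, not_lt]
      simp only [Set.mem_Ioo, not_and_or, not_lt] at ht
      rcases ht with h | h
      · nlinarith
      · nlinarith
    simp only [hzero, integral_zero, Set.indicator_of_notMem ht]

lemma Kfun_integrable (hτ : 0 < τ) (hη : 0 < η) (hR : η < R) :
    Integrable (Kfun τ R η) (volume : Measure (ℝ × ℝ × ℝ)) := by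
  have habs : ∀ x : ℝ, x^2 ≤ η^2 → |x| ≤ η := by
    intro x h
    nlinarith [sq_abs x, abs_nonneg x]
  set S := {u : ℝ × ℝ × ℝ | u.1^2 + u.2.1^2 + u.2.2^2 < η^2} with hS
  have hScont : Continuous fun u : ℝ × ℝ × ℝ => u.1^2 + u.2.1^2 + u.2.2^2 := by fun_prop
  have hSopen : IsOpen S := isOpen_lt hScont continuous_const
  have hSmeas : MeasurableSet S := hSopen.measurableSet
  have hSfin : volume S < ⊤ := by
    have hsub : S ⊆ Metric.closedBall 0 η := by
      intro u hu
      simp only [hS, Set.mem_setOf_eq] at hu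
      rw [Metric.mem_closedBall, dist_zero_right]
      have h1 : |u.1| ≤ η := habs _ (by nlinarith [sq_nonneg u.2.1, sq_nonneg u.2.2])
      have h2 : |u.2.1| ≤ η := habs _ (by nlinarith [sq_nonneg u.1, sq_nonneg u.2.2])
      have h3 : |u.2.2| ≤ η := habs _ (by nlinarith [sq_nonneg u.1, sq_nonneg u.2.1])
      rw [Prod.norm_def, Prod.norm_def]
      simp only [Real.norm_eq_abs]
      exact max_le h1 (max_le h2 h3)
    exact (measure_mono hsub).trans_lt (isCompact_closedBall _ _).measure_lt_top
  have hfmeas : Measurable (fun u : ℝ × ℝ × ℝ =>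
      Real.exp (-τ * Real.sqrt ((R-u.1)^2 + u.2.1^2 + u.2.2^2)) /
        Real.sqrt ((R-u.1)^2 + u.2.1^2 + u.2.2^2)) := by
    apply Measurable.div <;> fun_prop
  have hKmeas : AEStronglyMeasurable (Kfun τ R η) volume :=
    (hfmeas.indicator hSmeas).aestronglyMeasurable
  have hg : Integrable (S.indicator fun _ => (R - η)⁻¹) volume := by
    rw [integrable_indicator_iff hSmeas]
    exact integrableOn_const hSfin.ne
  apply Integrable.mono' hg hKmeas
  filter_upwards with u
  by_cases hu : u ∈ S
  · have hu' := hu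
    simp only [hS, Set.mem_setOf_eq] at hu'
    have hu1 : |u.1| ≤ η := habs _ (by nlinarith [sq_nonneg u.2.1, sq_nonneg u.2.2])
    have hb : R - η ≤ R - u.1 := by
      have := (abs_le.1 hu1).2; linarith
    have hb0 : 0 < R - η := by linarith
    have hD : R - η ≤ Real.sqrt ((R-u.1)^2 + u.2.1^2 + u.2.2^2) := by
      have h1 : (R-η)^2 ≤ (R-u.1)^2 + u.2.1^2 + u.2.2^2 := by nlinarith [sq_nonneg u.2.1, sq_nonneg u.2.2]
      calc R - η = Real.sqrt ((R-η)^2) := (Real.sqrt_sq hb0.le).symm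
        _ ≤ _ := Real.sqrt_le_sqrt h1
    have hD0 : 0 < Real.sqrt ((R-u.1)^2 + u.2.1^2 + u.2.2^2) := lt_of_lt_of_le hb0 hD
    rw [Kfun, Set.indicator_of_mem hu, Set.indicator_of_mem hu]
    rw [Real.norm_eq_abs, abs_of_nonneg (by positivity)]
    calc Real.exp (-τ * Real.sqrt ((R-u.1)^2 + u.2.1^2 + u.2.2^2)) /
          Real.sqrt ((R-u.1)^2 + u.2.1^2 + u.2.2^2)
        ≤ 1 / Real.sqrt ((R-u.1)^2 + u.2.1^2 + u.2.2^2) := by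
          refine (div_le_div_iff_of_pos_right hD0).2 (Real.exp_le_one_iff.2 ?_)
          have := Real.sqrt_nonneg ((R-u.1)^2 + u.2.1^2 + u.2.2^2)
          nlinarith
      _ ≤ (R - η)⁻¹ := by
          rw [one_div]
          exact inv_anti₀ hb0 hD
  · rw [Kfun, Set.indicator_of_notMem hu, Set.indicator_of_notMem hu]
    simp

lemma cube (hτ : 0 < τ) (hη : 0 < η) (hR : η < R) :
    ∫ u : ℝ × ℝ × ℝ, Kfun τ R η u =
      4*π*Real.exp (-τ*R)*(τ*η*Real.cosh (τ*η) - Real.sinh (τ*η))/(τ^3*R) := by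
  rw [Measure.volume_eq_prod, integral_prod _ (by rw [← Measure.volume_eq_prod]; exact Kfun_integrable hτ hη hR)]
  have : ∀ t : ℝ, ∫ w : ℝ × ℝ, Kfun τ R η (t, w) =
      Set.indicator (Set.Ioo (-η) η)
        (fun t => (2*π/τ) * (Real.exp (-τ*(R-t)) - Real.exp (-τ*Real.sqrt (R^2-2*R*t+η^2)))) t :=
    sliceInt hτ hη hR
  simp_rw [this]
  rw [integral_indicator measurableSet_Ioo, ← integral_Ioc_eq_integral_Ioo,
    ← intervalIntegral.integral_of_le (by linarith : (-η) ≤ η), intervalIntegral.integral_const_mul,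
    outer1d hτ hη hR]
  have hτ0 : τ ≠ 0 := hτ.ne'
  have hR0 : R ≠ 0 := (hη.trans hR).ne'
  field_simp
  ring

-- coordinate map is measure preserving
lemma theta_eq : (fun z : EuclideanSpace ℝ (Fin 3) => (z 0, (z 1, z 2))) =
    (MeasurableEquiv.prodCongr (MeasurableEquiv.refl ℝ) MeasurableEquiv.finTwoArrow) ∘
    (MeasurableEquiv.piFinSuccAbove (fun _ : Fin 3 => ℝ) 0) ∘
    (MeasurableEquiv.toLp 2 (Fin 3 → ℝ)).symm := by
  funext z
  simp [MeasurableEquiv.piFinSuccAbove, MeasurableEquiv.prodCongr, MeasurableEquiv.finTwoArrow,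
    MeasurableEquiv.toLp, Fin.insertNthEquiv, finTwoArrowEquiv]
  constructor
  · rfl
  constructor <;> rfl

lemma theta_mp : MeasurePreserving (fun z : EuclideanSpace ℝ (Fin 3) => (z 0, (z 1, z 2)))
    volume volume := by
  rw [theta_eq]
  have mp3 : MeasurePreserving
      (MeasurableEquiv.prodCongr (MeasurableEquiv.refl ℝ)
        (MeasurableEquiv.finTwoArrow (α := ℝ))) volume volume := by
    have h := (MeasurePreserving.id (volume : Measure ℝ)).prod
      (volume_preserving_finTwoArrow ℝ)
    rw [← Measure.volume_eq_prod, ← Measure.volume_eq_prod] at h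
    exact h
  exact mp3.comp ((volume_preserving_piFinSuccAbove (fun _ : Fin 3 => ℝ) 0).comp
    (EuclideanSpace.volume_preserving_symm_measurableEquiv_toLp (Fin 3)))

lemma theta_emb : MeasurableEmbedding (fun z : EuclideanSpace ℝ (Fin 3) => (z 0, (z 1, z 2))) := by
  rw [theta_eq]
  exact (MeasurableEquiv.prodCongr (MeasurableEquiv.refl ℝ)
      MeasurableEquiv.finTwoArrow).measurableEmbedding.comp
    ((MeasurableEquiv.piFinSuccAbove (fun _ : Fin 3 => ℝ) 0).measurableEmbedding.comp
      (MeasurableEquiv.toLp 2 (Fin 3 → ℝ)).symm.measurableEmbedding)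

lemma euclid_to_cube {τ η : ℝ} (hτ : 0 < τ) (hη : 0 < η) {R : ℝ} (hR : η < R) :
    ∫ z in Metric.ball (0 : EuclideanSpace ℝ (Fin 3)) η,
      Real.exp (-τ * ‖EuclideanSpace.single (0 : Fin 3) R - z‖) /
        ‖EuclideanSpace.single (0 : Fin 3) R - z‖
    = ∫ u : ℝ × ℝ × ℝ, Kfun τ R η u := by
  set c : EuclideanSpace ℝ (Fin 3) := EuclideanSpace.single (0 : Fin 3) R with hc
  have hpoint : ∀ z : EuclideanSpace ℝ (Fin 3),
      (Metric.ball (0 : EuclideanSpace ℝ (Fin 3)) η).indicator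
        (fun z => Real.exp (-τ * ‖c - z‖) / ‖c - z‖) z = Kfun τ R η (z 0, (z 1, z 2)) := by
    intro z
    have hnorm : ∀ w : EuclideanSpace ℝ (Fin 3),
        ‖w‖ = Real.sqrt (w 0 ^ 2 + w 1 ^ 2 + w 2 ^ 2) := by
      intro w
      rw [EuclideanSpace.norm_eq, Fin.sum_univ_three]
      simp [Real.norm_eq_abs, sq_abs, add_assoc]
    have hmem : z ∈ Metric.ball (0 : EuclideanSpace ℝ (Fin 3)) η ↔
        ((z 0, (z 1, z 2)) : ℝ × ℝ × ℝ) ∈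
          {u : ℝ × ℝ × ℝ | u.1^2 + u.2.1^2 + u.2.2^2 < η^2} := by
      rw [mem_ball_zero_iff, hnorm z, Set.mem_setOf_eq, Real.sqrt_lt' hη]
    have hval : ‖c - z‖ = Real.sqrt ((R - z 0)^2 + (z 1)^2 + (z 2)^2) := by
      have h0 : (c - z) 0 = R - z 0 := by
        simp [hc, PiLp.sub_apply, EuclideanSpace.single_apply]
      have h1 : (c - z) 1 = -(z 1) := by
        simp [hc, PiLp.sub_apply, EuclideanSpace.single_apply]
      have h2 : (c - z) 2 = -(z 2) := by
        simp [hc, PiLp.sub_apply, EuclideanSpace.single_apply]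
      rw [hnorm (c - z), h0, h1, h2, neg_sq, neg_sq]
    by_cases h : z ∈ Metric.ball (0 : EuclideanSpace ℝ (Fin 3)) η
    · rw [Set.indicator_of_mem h, Kfun, Set.indicator_of_mem (hmem.1 h), hval]
    · rw [Set.indicator_of_notMem h, Kfun, Set.indicator_of_notMem (fun hh => h (hmem.2 hh))]
  rw [← integral_indicator measurableSet_ball]
  simp_rw [hpoint]
  exact theta_mp.integral_comp theta_emb (Kfun τ _ _)

lemma ball_translate {τ η : ℝ} (p x : EuclideanSpace ℝ (Fin 3)) :
    ∫ y in Metric.ball p η, Real.exp (-τ * ‖x - y‖) / ‖x - y‖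
    = ∫ z in Metric.ball (0 : EuclideanSpace ℝ (Fin 3)) η,
        Real.exp (-τ * ‖(x - p) - z‖) / ‖(x - p) - z‖ := by
  have hmp : MeasurePreserving (fun z : EuclideanSpace ℝ (Fin 3) => p + z) volume volume :=
    measurePreserving_add_left volume p
  have hemb : MeasurableEmbedding (fun z : EuclideanSpace ℝ (Fin 3) => p + z) :=
    (Homeomorph.addLeft p).measurableEmbedding
  have hpre : (fun z : EuclideanSpace ℝ (Fin 3) => p + z) ⁻¹' (Metric.ball p η) =
      Metric.ball 0 η := by
    ext z
    simp [Metric.mem_ball, dist_eq_norm]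
  have := hmp.setIntegral_preimage_emb hemb
    (fun y => Real.exp (-τ * ‖x - y‖) / ‖x - y‖) (Metric.ball p η)
  rw [← this, hpre]
  congr 1 with z
  rw [show x - (p + z) = (x - p) - z by abel]

lemma ball_rotate {τ η : ℝ} (a c : EuclideanSpace ℝ (Fin 3)) (h : ‖c‖ = ‖a‖) :
    ∫ z in Metric.ball (0 : EuclideanSpace ℝ (Fin 3)) η,
        Real.exp (-τ * ‖a - z‖) / ‖a - z‖
    = ∫ z in Metric.ball (0 : EuclideanSpace ℝ (Fin 3)) η,
        Real.exp (-τ * ‖c - z‖) / ‖c - z‖ := by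
  set e := Submodule.reflection (ℝ ∙ (c - a))ᗮ with he
  have hca : e c = a := Submodule.reflection_sub h
  have hmp : MeasurePreserving (⇑e) volume volume := e.measurePreserving
  have hemb : MeasurableEmbedding (⇑e) := e.toHomeomorph.measurableEmbedding
  have hpre : (⇑e) ⁻¹' (Metric.ball (0 : EuclideanSpace ℝ (Fin 3)) η) = Metric.ball 0 η := by
    ext z
    simp [mem_ball_zero_iff, e.norm_map]
  have := hmp.setIntegral_preimage_emb hemb
    (fun z => Real.exp (-τ * ‖a - z‖) / ‖a - z‖) (Metric.ball 0 η)
  rw [← this, hpre]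
  congr 1 with z
  have : a - e z = e (c - z) := by rw [map_sub, hca]
  rw [this, e.norm_map]


theorem stmt_4 (η τ : ℝ) (hη : 0 < η) (hτ : 0 < τ)
    (φ : ℝ → ℝ) (hφ : ∀ ξ, φ ξ = ξ * Real.cosh ξ - Real.sinh ξ)
    (p x : EuclideanSpace ℝ (Fin 3)) (hx : η < ‖x - p‖) :
    (1 / (4 * π)) * ∫ y in Metric.ball p η, Real.exp (-τ * ‖x - y‖) / ‖x - y‖ =
      (φ (τ * η) / τ^3) * (Real.exp (-τ * ‖x - p‖) / ‖x - p‖) := by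
  set R := ‖x - p‖ with hRdef
  have hR : η < R := hx
  have hR0 : 0 < R := hη.trans hR
  have hcnorm : ‖EuclideanSpace.single (0 : Fin 3) R‖ = ‖x - p‖ := by
    rw [EuclideanSpace.norm_single, Real.norm_eq_abs, abs_of_pos hR0]
  rw [ball_translate p x, ball_rotate (x - p) (EuclideanSpace.single (0 : Fin 3) R) hcnorm,
    euclid_to_cube hτ hη hR, cube hτ hη hR, hφ]
  have hπ : (π : ℝ) ≠ 0 := Real.pi_ne_zero
  have hτ0 : τ ≠ 0 := hτ.ne'
  have hR0' : R ≠ 0 := hR0.ne'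
  field_simp
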